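/- arXiv:2002.00304 — 2 statements merged into one kernel-verified Lean document; each statement's English description precedes it below -/
import Mathlib

section
/- Let R be a unital alternative ring with nontrivial idempotent e₁ and e₂ = 1 − e₁, k-torsion free for every k ∈ {2, 3, n−1, n−3} with k ≥ 1, satisfying conditions (1), (2), (3) and (4), and let D : R → R be a multiplicative Lie n-derivation (n ≥ 2). If D(e₁) ∈ Z(R), then D(e₂) ∈ Z(R). -/
/-- The commutative center of a (possibly non-associative, non-unital) ring. -/
def rctr (R : Type*) [NonUnitalNonAssocRing R] : Set R := {z | ∀ x, z * x = x * z}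

/-- `R` is an alternative ring. -/
def IsAlt (R : Type*) [NonUnitalNonAssocRing R] : Prop :=
  ∀ x y : R, (x * x) * y = x * (x * y) ∧ (y * x) * x = y * (x * x)

/-- Peirce components relative to an idempotent `e`. -/
def P11 {R : Type*} [NonUnitalNonAssocRing R] (e : R) : Set R := {x | e * x = x ∧ x * e = x}
def P12 {R : Type*} [NonUnitalNonAssocRing R] (e : R) : Set R := {x | e * x = x ∧ x * e = 0}
def P21 {R : Type*} [NonUnitalNonAssocRing R] (e : R) : Set R := {x | e * x = 0 ∧ x * e = x}
def P22 {R : Type*} [NonUnitalNonAssocRing R] (e : R) : Set R := {x | e * x = 0 ∧ x * e = 0}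

/-- The iterated commutator `p_n`: `p_1(x) = x`,
`p_n(x_1,…,x_n) = [p_{n-1}(x_1,…,x_{n-1}), x_n]`. -/
def pn {R : Type*} [NonUnitalNonAssocRing R] : (n : ℕ) → (Fin n → R) → R
  | 0, _ => 0
  | 1, x => x 0
  | (m+2), x =>
      pn (m+1) (fun i => x i.castSucc) * x (Fin.last (m+1))
        - x (Fin.last (m+1)) * pn (m+1) (fun i => x i.castSucc)

/-- A (not necessarily additive) map `D` is a multiplicative Lie `n`-derivation. -/
def IsMultLieNDeriv {R : Type*} [NonUnitalNonAssocRing R] (n : ℕ) (D : R → R) : Prop :=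
  ∀ x : Fin n → R, D (pn n x) = ∑ i : Fin n, pn n (Function.update x i (D (x i)))

/-!
Since `e₁ + e₂ = 1`, we have `⁅e₁, -y⁆ = ⁅e₂, y⁆` and `⁅e₁, y⁆ = ⁅e₂, -y⁆`, so `p_n` agrees on
`(e₁, -y, x₃, …)` and `(e₂, y, x₃, …)`, and on `(e₁, y, x₃, …)` and `(e₂, -y, x₃, …)`. Expanding `D`
on both sides of these two identities, the terms where `D` hits `x₃, …, x_n` agree and the term
with `D e₁` vanishes since `D e₁` is central; adding the two resulting equations leaves
`2 p_n(D e₂, y, x₃, …, x_n) = 0`.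

For `n = 2` this says that `D e₂` is central. For `n ≥ 3` take `x₃ = z` and `x_i = e₁` afterwards,
and use the Peirce decomposition of the alternative ring: `⁅·, e₁⁆` acts as `-1` on `R₁₂`, as `1`
on `R₂₁` and as `0` on `R₁₁ + R₂₂`. With `y = z = e₁` this puts `b = D e₂` into `R₁₁ + R₂₂`. Then
`⁅b, x⁆` stays in `R₁₂` (resp. `R₂₁`) for `x` there, so it vanishes; for `x ∈ R₁₁` (resp. `R₂₂`)
the element `c = ⁅b, x⁆` satisfies `c * m = 0` (resp. `m * c = 0`) for all `m ∈ R₁₂`, so `c = 0`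
by conditions (2) and (3).
-/

section LieChain

variable {R : Type*} [NonUnitalNonAssocRing R]

def adRight (e : R) : AddMonoid.End R := AddMonoidHom.mulRight e - AddMonoidHom.mulLeft e

theorem adRight_pow_succ_apply (e x : R) (k : ℕ) :
    (adRight e ^ (k + 1)) x = (adRight e ^ k) ⁅x, e⁆ := rfl

def lieChain : (m : ℕ) → (Fin m → R) → AddMonoid.End R
  | 0, _ => 1
  | m + 1, t => adRight (t (Fin.last m)) * lieChain m (Fin.init t)

theorem lieChain_const (e : R) : ∀ m : ℕ, lieChain m (fun _ => e) = adRight e ^ m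
  | 0 => rfl
  | m + 1 => by rw [lieChain, pow_succ', Fin.init_def, lieChain_const e m]

theorem lieChain_cons (y c : R) : ∀ {m : ℕ} (t : Fin m → R),
    lieChain (m + 1) (Fin.cons y t) c = lieChain m t ⁅c, y⁆
  | 0, _ => rfl
  | m + 1, t => by
    have hinit : Fin.init (Fin.cons y t : Fin (m + 2) → R) = Fin.cons y (Fin.init t) := by
      funext i; cases i using Fin.cases <;> rfl
    rw [lieChain, AddMonoid.End.coe_mul, Function.comp_apply, hinit,
      lieChain_cons y c (Fin.init t), Fin.cons_last]
    rfl

theorem pn_cons (c : R) : ∀ {m : ℕ} (t : Fin m → R), pn (m + 1) (Fin.cons c t) = lieChain m t c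
  | 0, _ => rfl
  | m + 1, t => by
    have hinit : (fun i : Fin (m + 1) => (Fin.cons c t : Fin (m + 2) → R) i.castSucc) =
        Fin.cons c (Fin.init t) := by
      funext i; cases i using Fin.cases <;> rfl
    rw [pn, hinit, pn_cons c (Fin.init t), Fin.cons_last]
    rfl

theorem pn_cons_cons (a y : R) {m : ℕ} (t : Fin m → R) :
    pn (m + 2) (Fin.cons a (Fin.cons y t)) = lieChain m t ⁅a, y⁆ := by
  rw [pn_cons, lieChain_cons]

end LieChain

section Derivation

variable {R : Type*} [NonAssocRing R]

theorem Ring.lie_neg_right (a w : R) : ⁅a, -w⁆ = -⁅a, w⁆ := by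
  simp only [Ring.lie_def, mul_neg, neg_mul, neg_sub, sub_neg_eq_add, neg_add_eq_sub]

theorem Ring.lie_eq_lie_neg_of_add_eq_one {a b : R} (hab : a + b = 1) (w : R) :
    ⁅a, w⁆ = ⁅b, -w⁆ := by
  rw [eq_sub_of_add_eq hab]
  simp only [Ring.lie_def, sub_mul, mul_sub, one_mul, mul_one, mul_neg, neg_mul]
  abel

theorem IsMultLieNDeriv.map_lieChain_lie {m : ℕ} {D : R → R} (hD : IsMultLieNDeriv (m + 2) D)
    (a y : R) (t : Fin m → R) :
    D (lieChain m t ⁅a, y⁆) = lieChain m t ⁅D a, y⁆ + lieChain m t ⁅a, D y⁆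
      + ∑ j, lieChain m (Function.update t j (D (t j))) ⁅a, y⁆ := by
  have h := hD (Fin.cons a (Fin.cons y t))
  simp only [Fin.sum_univ_succ, Fin.cons_zero, Fin.cons_succ, Fin.update_cons_zero,
    ← Fin.cons_update, pn_cons_cons] at h
  rw [h, add_assoc]

theorem IsMultLieNDeriv.lieChain_lie_map_eq_zero {m : ℕ} {D : R → R}
    (hD : IsMultLieNDeriv (m + 2) D) (h2 : ∀ x : R, 2 • x = 0 → x = 0) {e₁ e₂ : R}
    (he : e₁ + e₂ = 1) (hDe₁ : D e₁ ∈ rctr R) (y : R) (t : Fin m → R) :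
    lieChain m t ⁅D e₂, y⁆ = 0 := by
  have hswap := Ring.lie_eq_lie_neg_of_add_eq_one he
  have hcent (w : R) : ⁅D e₁, w⁆ = 0 := Commute.lie_eq (hDe₁ w)
  have hD₂y := hD.map_lieChain_lie e₂ y t
  have hD₁ny := hD.map_lieChain_lie e₁ (-y) t
  have hD₂ny := hD.map_lieChain_lie e₂ (-y) t
  have hD₁y := hD.map_lieChain_lie e₁ y t
  simp only [hswap, hcent, neg_neg, map_zero, zero_add] at hD₁ny hD₁y
  rw [hD₂y] at hD₁ny
  rw [hD₂ny] at hD₁y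
  simp only [Ring.lie_neg_right, map_neg] at hD₁ny hD₁y
  set A := lieChain m t ⁅D e₂, y⁆
  set B := lieChain m t ⁅e₂, D y⁆
  set C := lieChain m t ⁅e₂, D (-y)⁆
  have hA : A + B = -C := add_right_cancel hD₁ny
  have hB : -A + C = -B := add_right_cancel hD₁y
  refine h2 A ?_
  calc 2 • A = (A + B) - (-A + C) + (C - B) := by abel
    _ = 0 := by rw [hA, hB]; abel

end Derivation

namespace IsAlt

variable {R : Type*} [NonAssocRing R] {e : R}

theorem add_mul_mul_left (halt : IsAlt R) (x y z : R) :
    (x * y) * z + (y * x) * z = x * (y * z) + y * (x * z) := by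
  have key : ((x * y) * z + (y * x) * z) - (x * (y * z) + y * (x * z)) =
      (((x + y) * (x + y)) * z - (x + y) * ((x + y) * z)) - ((x * x) * z - x * (x * z))
        - ((y * y) * z - y * (y * z)) := by
    simp only [add_mul, mul_add]; abel
  rwa [sub_eq_zero.2 (halt (x + y) z).1, sub_eq_zero.2 (halt x z).1,
    sub_eq_zero.2 (halt y z).1, sub_zero, sub_zero, sub_eq_zero] at key

theorem add_mul_mul_right (halt : IsAlt R) (x y z : R) :
    (x * y) * z + (x * z) * y = x * (y * z) + x * (z * y) := by
  have key : ((x * y) * z + (x * z) * y) - (x * (y * z) + x * (z * y)) =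
      ((x * (y + z)) * (y + z) - x * ((y + z) * (y + z))) - ((x * y) * y - x * (y * y))
        - ((x * z) * z - x * (z * z)) := by
    simp only [add_mul, mul_add]; abel
  rwa [sub_eq_zero.2 (halt (y + z) x).2, sub_eq_zero.2 (halt y x).2,
    sub_eq_zero.2 (halt z x).2, sub_zero, sub_zero, sub_eq_zero] at key

theorem idem_mul_idem_mul (halt : IsAlt R) (he : IsIdempotentElem e) (x : R) :
    e * (e * x) = e * x := by
  rw [← (halt e x).1, he.eq]

theorem mul_idem_mul_idem (halt : IsAlt R) (he : IsIdempotentElem e) (x : R) :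
    (x * e) * e = x * e := by
  rw [(halt e x).2, he.eq]

theorem idem_mul_mul_idem (halt : IsAlt R) (he : IsIdempotentElem e) (x : R) :
    e * (x * e) = (e * x) * e := by
  have h := halt.add_mul_mul_right e x e
  rw [he.eq, halt.idem_mul_idem_mul he] at h
  exact (add_right_cancel h).symm

theorem eq_zero_of_idem_mul_eq_add_self (halt : IsAlt R) (he : IsIdempotentElem e)
    (h2 : ∀ x : R, 2 • x = 0 → x = 0) {t : R} (h : e * t = t + t) : t = 0 := by
  have h1 := halt.idem_mul_idem_mul he t
  rw [h, mul_add, h] at h1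
  exact h2 t (by rw [two_nsmul]; exact add_left_cancel (h1.trans (add_zero _).symm))

theorem eq_zero_of_mul_idem_eq_add_self (halt : IsAlt R) (he : IsIdempotentElem e)
    (h2 : ∀ x : R, 2 • x = 0 → x = 0) {t : R} (h : t * e = t + t) : t = 0 := by
  have h1 := halt.mul_idem_mul_idem he t
  rw [h, add_mul, h] at h1
  exact h2 t (by rw [two_nsmul]; exact add_left_cancel (h1.trans (add_zero _).symm))

variable {a a' m p d d' : R}

theorem P11_mul_P11_mem (halt : IsAlt R) (ha : a ∈ P11 e) (ha' : a' ∈ P11 e) :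
    a * a' ∈ P11 e := by
  have hl := halt.add_mul_mul_left e a a'
  have hr := halt.add_mul_mul_right a a' e
  rw [ha.1, ha.2, ha'.1] at hl
  rw [ha.2, ha'.2, ha'.1] at hr
  exact ⟨(add_right_cancel hl).symm, add_right_cancel hr⟩

theorem P11_mul_P12_mem (halt : IsAlt R) (ha : a ∈ P11 e) (hm : m ∈ P12 e) :
    a * m ∈ P12 e := by
  have hl := halt.add_mul_mul_left e a m
  have hr := halt.add_mul_mul_right a m e
  rw [ha.1, ha.2, hm.1] at hl
  rw [ha.2, hm.2, hm.1, mul_zero, zero_add] at hr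
  exact ⟨(add_right_cancel hl).symm, add_eq_right.1 hr⟩

theorem P12_mul_P22_mem (halt : IsAlt R) (hm : m ∈ P12 e) (hd : d ∈ P22 e) :
    m * d ∈ P12 e := by
  have hl := halt.add_mul_mul_left e m d
  have hr := halt.add_mul_mul_right m d e
  rw [hm.1, hm.2, hd.1, zero_mul, mul_zero, add_zero, add_zero] at hl
  rw [hm.2, hd.2, hd.1, zero_mul, mul_zero, add_zero, add_zero] at hr
  exact ⟨hl.symm, hr⟩

theorem P21_mul_P11_mem (halt : IsAlt R) (hp : p ∈ P21 e) (ha : a ∈ P11 e) :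
    p * a ∈ P21 e := by
  have hl := halt.add_mul_mul_left e p a
  have hr := halt.add_mul_mul_right p a e
  rw [hp.1, hp.2, ha.1, zero_mul, zero_add] at hl
  rw [hp.2, ha.2, ha.1] at hr
  exact ⟨right_eq_add.1 hl, add_right_cancel hr⟩

theorem P22_mul_P21_mem (halt : IsAlt R) (hd : d ∈ P22 e) (hp : p ∈ P21 e) :
    d * p ∈ P21 e := by
  have hl := halt.add_mul_mul_left e d p
  have hr := halt.add_mul_mul_right d p e
  rw [hd.1, hd.2, hp.1, zero_mul, mul_zero, add_zero, add_zero] at hl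
  rw [hd.2, hp.2, hp.1, zero_mul, mul_zero, add_zero, add_zero] at hr
  exact ⟨hl.symm, hr⟩

theorem P22_mul_P22_mem (halt : IsAlt R) (hd : d ∈ P22 e) (hd' : d' ∈ P22 e) :
    d * d' ∈ P22 e := by
  have hl := halt.add_mul_mul_left e d d'
  have hr := halt.add_mul_mul_right d d' e
  rw [hd.1, hd.2, hd'.1, zero_mul, mul_zero, add_zero, add_zero] at hl
  rw [hd.2, hd'.2, hd'.1, zero_mul, mul_zero, add_zero, add_zero] at hr
  exact ⟨hl.symm, hr⟩
theorem P11_mul_P21_eq_zero (halt : IsAlt R) (he : IsIdempotentElem e)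
    (h2 : ∀ x : R, 2 • x = 0 → x = 0) (ha : a ∈ P11 e) (hp : p ∈ P21 e) : a * p = 0 := by
  have h := halt.add_mul_mul_left a e p
  rw [ha.2, ha.1, hp.1, mul_zero, zero_add] at h
  exact halt.eq_zero_of_idem_mul_eq_add_self he h2 h.symm

theorem P11_mul_P22_eq_zero (halt : IsAlt R) (he : IsIdempotentElem e)
    (h2 : ∀ x : R, 2 • x = 0 → x = 0) (ha : a ∈ P11 e) (hd : d ∈ P22 e) : a * d = 0 := by
  have h := halt.add_mul_mul_left a e d
  rw [ha.2, ha.1, hd.1, mul_zero, zero_add] at h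
  exact halt.eq_zero_of_idem_mul_eq_add_self he h2 h.symm

theorem P12_mul_P11_eq_zero (halt : IsAlt R) (he : IsIdempotentElem e)
    (h2 : ∀ x : R, 2 • x = 0 → x = 0) (hm : m ∈ P12 e) (ha : a ∈ P11 e) : m * a = 0 := by
  have h := halt.add_mul_mul_right m e a
  rw [hm.2, zero_mul, zero_add, ha.1, ha.2] at h
  exact halt.eq_zero_of_mul_idem_eq_add_self he h2 h

theorem P22_mul_P11_eq_zero (halt : IsAlt R) (he : IsIdempotentElem e)
    (h2 : ∀ x : R, 2 • x = 0 → x = 0) (hd : d ∈ P22 e) (ha : a ∈ P11 e) : d * a = 0 := by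
  have h := halt.add_mul_mul_right d e a
  rw [hd.2, zero_mul, zero_add, ha.1, ha.2] at h
  exact halt.eq_zero_of_mul_idem_eq_add_self he h2 h

theorem P22_mul_P12_eq_zero (halt : IsAlt R) (he : IsIdempotentElem e)
    (h2 : ∀ x : R, 2 • x = 0 → x = 0) (hd : d ∈ P22 e) (hm : m ∈ P12 e) : d * m = 0 := by
  have h := halt.add_mul_mul_left e d m
  rw [hd.1, hd.2, hm.1, zero_mul, add_zero] at h
  refine halt.eq_zero_of_idem_mul_eq_add_self he.one_sub h2 ?_
  rw [sub_mul, one_mul, eq_neg_of_add_eq_zero_left h.symm, sub_neg_eq_add]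

theorem P21_mul_P22_eq_zero (halt : IsAlt R) (he : IsIdempotentElem e)
    (h2 : ∀ x : R, 2 • x = 0 → x = 0) (hp : p ∈ P21 e) (hd : d ∈ P22 e) : p * d = 0 := by
  have h := halt.add_mul_mul_right p e d
  rw [hp.2, hd.1, hd.2, mul_zero, add_zero] at h
  refine halt.eq_zero_of_mul_idem_eq_add_self he.one_sub h2 ?_
  rw [mul_sub, mul_one, eq_neg_of_add_eq_zero_right h, sub_neg_eq_add]

end IsAlt

section Peirce

variable {R : Type*} [NonAssocRing R]

def peirce11 (e x : R) : R := (e * x) * e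
def peirce12 (e x : R) : R := e * x - (e * x) * e
def peirce21 (e x : R) : R := x * e - (e * x) * e
def peirce22 (e x : R) : R := x - e * x - x * e + (e * x) * e

theorem peirce_sum (e x : R) :
    peirce11 e x + peirce12 e x + peirce21 e x + peirce22 e x = x := by
  simp only [peirce11, peirce12, peirce21, peirce22]; abel

theorem peirce12_of_mem {e m : R} (hm : m ∈ P12 e) : peirce12 e m = m := by
  rw [peirce12, hm.1, hm.2, sub_zero]

theorem peirce21_of_mem {e p : R} (hp : p ∈ P21 e) : peirce21 e p = p := by
  rw [peirce21, hp.1, hp.2, zero_mul, sub_zero]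

namespace IsAlt

variable {e : R}

theorem peirce11_mem (halt : IsAlt R) (he : IsIdempotentElem e) (x : R) :
    peirce11 e x ∈ P11 e := by
  constructor <;>
  simp only [peirce11, halt.idem_mul_mul_idem he, halt.idem_mul_idem_mul he,
    halt.mul_idem_mul_idem he]

theorem peirce12_mem (halt : IsAlt R) (he : IsIdempotentElem e) (x : R) :
    peirce12 e x ∈ P12 e := by
  constructor <;>
  simp only [peirce12, mul_sub, sub_mul, halt.idem_mul_mul_idem he, halt.idem_mul_idem_mul he,
    halt.mul_idem_mul_idem he, sub_self]

theorem peirce21_mem (halt : IsAlt R) (he : IsIdempotentElem e) (x : R) :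
    peirce21 e x ∈ P21 e := by
  constructor <;>
  simp only [peirce21, mul_sub, sub_mul, halt.idem_mul_mul_idem he, halt.idem_mul_idem_mul he,
    halt.mul_idem_mul_idem he, sub_self]

theorem peirce22_mem (halt : IsAlt R) (he : IsIdempotentElem e) (x : R) :
    peirce22 e x ∈ P22 e := by
  constructor <;>
  simp only [peirce22, mul_add, add_mul, mul_sub, sub_mul, halt.idem_mul_mul_idem he,
    halt.idem_mul_idem_mul he, halt.mul_idem_mul_idem he] <;>
  abel

theorem peirce12_lie (halt : IsAlt R) (he : IsIdempotentElem e) (x : R) :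
    peirce12 e ⁅x, e⁆ = -peirce12 e x := by
  simp only [peirce12, Ring.lie_def, mul_sub, sub_mul, halt.idem_mul_mul_idem he,
    halt.idem_mul_idem_mul he, halt.mul_idem_mul_idem he]
  abel

theorem peirce21_lie (halt : IsAlt R) (he : IsIdempotentElem e) (x : R) :
    peirce21 e ⁅x, e⁆ = peirce21 e x := by
  simp only [peirce21, Ring.lie_def, mul_sub, sub_mul, halt.idem_mul_mul_idem he,
    halt.idem_mul_idem_mul he, halt.mul_idem_mul_idem he]
  abel

theorem peirce12_eq_zero_of_adRight_pow (halt : IsAlt R) (he : IsIdempotentElem e) :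
    ∀ (k : ℕ) {x : R}, (adRight e ^ k) x = 0 → peirce12 e x = 0
  | 0, x, h => by obtain rfl : x = 0 := h; rw [peirce12, mul_zero, zero_mul, sub_zero]
  | k + 1, x, h => by
    rw [← neg_eq_zero, ← halt.peirce12_lie he]
    exact peirce12_eq_zero_of_adRight_pow halt he k h

theorem peirce21_eq_zero_of_adRight_pow (halt : IsAlt R) (he : IsIdempotentElem e) :
    ∀ (k : ℕ) {x : R}, (adRight e ^ k) x = 0 → peirce21 e x = 0
  | 0, x, h => by obtain rfl : x = 0 := h; rw [peirce21, mul_zero, zero_mul, sub_zero]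
  | k + 1, x, h => by
    rw [← halt.peirce21_lie he]
    exact peirce21_eq_zero_of_adRight_pow halt he k h

variable {b₁ b₂ a m p d : R} {k : ℕ}

theorem eq_zero_of_mem_P12_of_adRight_pow (halt : IsAlt R) (he : IsIdempotentElem e)
    (hm : m ∈ P12 e) (h : (adRight e ^ k) m = 0) : m = 0 := by
  rw [← peirce12_of_mem hm]
  exact halt.peirce12_eq_zero_of_adRight_pow he k h

theorem eq_zero_of_mem_P21_of_adRight_pow (halt : IsAlt R) (he : IsIdempotentElem e)
    (hp : p ∈ P21 e) (h : (adRight e ^ k) p = 0) : p = 0 := by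
  rw [← peirce21_of_mem hp]
  exact halt.peirce21_eq_zero_of_adRight_pow he k h

theorem lie_mem_P11 (halt : IsAlt R) (he : IsIdempotentElem e)
    (h2 : ∀ x : R, 2 • x = 0 → x = 0) (hb₁ : b₁ ∈ P11 e) (hb₂ : b₂ ∈ P22 e) (ha : a ∈ P11 e) :
    ⁅b₁ + b₂, a⁆ ∈ P11 e := by
  obtain ⟨hl, hl'⟩ := halt.P11_mul_P11_mem hb₁ ha
  obtain ⟨hr, hr'⟩ := halt.P11_mul_P11_mem ha hb₁
  rw [Ring.lie_def, add_mul, mul_add, halt.P22_mul_P11_eq_zero he h2 hb₂ ha,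
    halt.P11_mul_P22_eq_zero he h2 ha hb₂, add_zero, add_zero]
  exact ⟨by rw [mul_sub, hl, hr], by rw [sub_mul, hl', hr']⟩

theorem lie_mem_P12 (halt : IsAlt R) (he : IsIdempotentElem e)
    (h2 : ∀ x : R, 2 • x = 0 → x = 0) (hb₁ : b₁ ∈ P11 e) (hb₂ : b₂ ∈ P22 e) (hm : m ∈ P12 e) :
    ⁅b₁ + b₂, m⁆ ∈ P12 e := by
  obtain ⟨hl, hl'⟩ := halt.P11_mul_P12_mem hb₁ hm
  obtain ⟨hr, hr'⟩ := halt.P12_mul_P22_mem hm hb₂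
  rw [Ring.lie_def, add_mul, mul_add, halt.P22_mul_P12_eq_zero he h2 hb₂ hm,
    halt.P12_mul_P11_eq_zero he h2 hm hb₁, add_zero, zero_add]
  exact ⟨by rw [mul_sub, hl, hr], by rw [sub_mul, hl', hr', sub_zero]⟩

theorem lie_mem_P21 (halt : IsAlt R) (he : IsIdempotentElem e)
    (h2 : ∀ x : R, 2 • x = 0 → x = 0) (hb₁ : b₁ ∈ P11 e) (hb₂ : b₂ ∈ P22 e) (hp : p ∈ P21 e) :
    ⁅b₁ + b₂, p⁆ ∈ P21 e := by
  obtain ⟨hl, hl'⟩ := halt.P22_mul_P21_mem hb₂ hp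
  obtain ⟨hr, hr'⟩ := halt.P21_mul_P11_mem hp hb₁
  rw [Ring.lie_def, add_mul, mul_add, halt.P11_mul_P21_eq_zero he h2 hb₁ hp,
    halt.P21_mul_P22_eq_zero he h2 hp hb₂, zero_add, add_zero]
  exact ⟨by rw [mul_sub, hl, hr, sub_zero], by rw [sub_mul, hl', hr']⟩

theorem lie_mem_P22 (halt : IsAlt R) (he : IsIdempotentElem e)
    (h2 : ∀ x : R, 2 • x = 0 → x = 0) (hb₁ : b₁ ∈ P11 e) (hb₂ : b₂ ∈ P22 e) (hd : d ∈ P22 e) :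
    ⁅b₁ + b₂, d⁆ ∈ P22 e := by
  obtain ⟨hl, hl'⟩ := halt.P22_mul_P22_mem hb₂ hd
  obtain ⟨hr, hr'⟩ := halt.P22_mul_P22_mem hd hb₂
  rw [Ring.lie_def, add_mul, mul_add, halt.P11_mul_P22_eq_zero he h2 hb₁ hd,
    halt.P22_mul_P11_eq_zero he h2 hd hb₁, zero_add, zero_add]
  exact ⟨by rw [mul_sub, hl, hr, sub_zero], by rw [sub_mul, hl', hr', sub_zero]⟩

theorem commute_of_mem_P12 (halt : IsAlt R) (he : IsIdempotentElem e)
    (h2 : ∀ x : R, 2 • x = 0 → x = 0) (hb₁ : b₁ ∈ P11 e) (hb₂ : b₂ ∈ P22 e)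
    (hb : ∀ y z : R, (adRight e ^ k) ⁅⁅b₁ + b₂, y⁆, z⁆ = 0) (hm : m ∈ P12 e) :
    Commute (b₁ + b₂) m :=
  commute_iff_lie_eq.2 <| halt.eq_zero_of_mem_P12_of_adRight_pow he
    (halt.lie_mem_P12 he h2 hb₁ hb₂ hm) ((adRight_pow_succ_apply e _ k).trans (hb m e))

theorem commute_of_mem_P21 (halt : IsAlt R) (he : IsIdempotentElem e)
    (h2 : ∀ x : R, 2 • x = 0 → x = 0) (hb₁ : b₁ ∈ P11 e) (hb₂ : b₂ ∈ P22 e)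
    (hb : ∀ y z : R, (adRight e ^ k) ⁅⁅b₁ + b₂, y⁆, z⁆ = 0) (hp : p ∈ P21 e) :
    Commute (b₁ + b₂) p :=
  commute_iff_lie_eq.2 <| halt.eq_zero_of_mem_P21_of_adRight_pow he
    (halt.lie_mem_P21 he h2 hb₁ hb₂ hp) ((adRight_pow_succ_apply e _ k).trans (hb p e))

theorem commute_of_mem_P11 (halt : IsAlt R) (he : IsIdempotentElem e)
    (h2 : ∀ x : R, 2 • x = 0 → x = 0) (hc2 : ∀ x ∈ P11 e, (∀ y ∈ P12 e, x * y = 0) → x = 0)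
    (hb₁ : b₁ ∈ P11 e) (hb₂ : b₂ ∈ P22 e)
    (hb : ∀ y z : R, (adRight e ^ k) ⁅⁅b₁ + b₂, y⁆, z⁆ = 0) (ha : a ∈ P11 e) :
    Commute (b₁ + b₂) a := by
  have hX := halt.lie_mem_P11 he h2 hb₁ hb₂ ha
  refine commute_iff_lie_eq.2 (hc2 _ hX fun m hm => ?_)
  have hXm : ⁅⁅b₁ + b₂, a⁆, m⁆ = ⁅b₁ + b₂, a⁆ * m := by
    rw [Ring.lie_def _ m, halt.P12_mul_P11_eq_zero he h2 hm hX, sub_zero]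
  exact halt.eq_zero_of_mem_P12_of_adRight_pow he (halt.P11_mul_P12_mem hX hm) (hXm ▸ hb a m)

theorem commute_of_mem_P22 (halt : IsAlt R) (he : IsIdempotentElem e)
    (h2 : ∀ x : R, 2 • x = 0 → x = 0) (hc3 : ∀ x ∈ P22 e, (∀ y ∈ P12 e, y * x = 0) → x = 0)
    (hb₁ : b₁ ∈ P11 e) (hb₂ : b₂ ∈ P22 e)
    (hb : ∀ y z : R, (adRight e ^ k) ⁅⁅b₁ + b₂, y⁆, z⁆ = 0) (hd : d ∈ P22 e) :
    Commute (b₁ + b₂) d := by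
  have hX := halt.lie_mem_P22 he h2 hb₁ hb₂ hd
  refine commute_iff_lie_eq.2 (hc3 _ hX fun m hm => ?_)
  have hXm : ⁅⁅b₁ + b₂, d⁆, m⁆ = -(m * ⁅b₁ + b₂, d⁆) := by
    rw [Ring.lie_def _ m, halt.P22_mul_P12_eq_zero he h2 hX hm, zero_sub]
  have h := hb d m
  rw [hXm, map_neg, neg_eq_zero] at h
  exact halt.eq_zero_of_mem_P12_of_adRight_pow he (halt.P12_mul_P22_mem hm hX) h

theorem mem_rctr_of_adRight_pow_lie_lie_eq_zero (halt : IsAlt R) (he : IsIdempotentElem e)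
    (h2 : ∀ x : R, 2 • x = 0 → x = 0) (hc2 : ∀ x ∈ P11 e, (∀ y ∈ P12 e, x * y = 0) → x = 0)
    (hc3 : ∀ x ∈ P22 e, (∀ y ∈ P12 e, y * x = 0) → x = 0) {b : R}
    (hb : ∀ y z : R, (adRight e ^ k) ⁅⁅b, y⁆, z⁆ = 0) : b ∈ rctr R := by
  have hb2 : (adRight e ^ (k + 2)) b = 0 := by
    rw [adRight_pow_succ_apply, adRight_pow_succ_apply]
    exact hb e e
  obtain ⟨b₁, hb₁, b₂, hb₂, rfl⟩ : ∃ b₁ ∈ P11 e, ∃ b₂ ∈ P22 e, b = b₁ + b₂ := by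
    refine ⟨_, halt.peirce11_mem he b, _, halt.peirce22_mem he b, ?_⟩
    conv_lhs => rw [← peirce_sum e b, halt.peirce12_eq_zero_of_adRight_pow he _ hb2,
      halt.peirce21_eq_zero_of_adRight_pow he _ hb2, add_zero, add_zero]
  intro x
  rw [← peirce_sum e x]
  exact (((halt.commute_of_mem_P11 he h2 hc2 hb₁ hb₂ hb (halt.peirce11_mem he x)).add_right
    (halt.commute_of_mem_P12 he h2 hb₁ hb₂ hb (halt.peirce12_mem he x))).add_right
    (halt.commute_of_mem_P21 he h2 hb₁ hb₂ hb (halt.peirce21_mem he x))).add_right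
    (halt.commute_of_mem_P22 he h2 hc3 hb₁ hb₂ hb (halt.peirce22_mem he x))

end IsAlt

end Peirce

theorem stmt12_general {R : Type*} [NonAssocRing R] (halt : IsAlt R)
    (e₁ e₂ : R) (he₂ : e₂ = 1 - e₁)
    (he : e₁ * e₁ = e₁)
    (n : ℕ) (hn : 2 ≤ n)
    (htor : ∀ k ∈ ({2, 3, n - 1, n - 3} : Set ℕ), 1 ≤ k → ∀ x : R, k • x = 0 → x = 0)
    (hc2 : (∀ x ∈ P11 e₁, (∀ y ∈ P12 e₁, x * y = 0) → x = 0) ∧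
           (∀ x ∈ P11 e₁, (∀ y ∈ P21 e₁, y * x = 0) → x = 0))
    (hc3 : (∀ x ∈ P22 e₁, (∀ y ∈ P12 e₁, y * x = 0) → x = 0) ∧
           (∀ x ∈ P22 e₁, (∀ y ∈ P21 e₁, x * y = 0) → x = 0))
    (D : R → R) (hD : IsMultLieNDeriv n D)
    (hDe₁ : D e₁ ∈ rctr R) :
    D e₂ ∈ rctr R := by
  have h2 : ∀ x : R, 2 • x = 0 → x = 0 := htor 2 (by simp) (by norm_num)
  obtain ⟨m, rfl⟩ : ∃ m, n = m + 2 := ⟨n - 2, by omega⟩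
  have hsum : e₁ + e₂ = 1 := by rw [he₂, add_sub_cancel]
  have hvanish := hD.lieChain_lie_map_eq_zero h2 hsum hDe₁
  cases m with
  | zero => exact fun y => commute_iff_lie_eq.2 (hvanish y Fin.elim0)
  | succ k =>
    refine halt.mem_rctr_of_adRight_pow_lie_lie_eq_zero he h2 hc2.1 hc3.1 (k := k) fun y z => ?_
    rw [← lieChain_const, ← lieChain_cons]
    exact hvanish y _

theorem stmt12 {R : Type*} [NonAssocRing R] (halt : IsAlt R)
    (e₁ e₂ : R) (he₂ : e₂ = 1 - e₁)
    (he : e₁ * e₁ = e₁) (hne0 : e₁ ≠ 0) (hne1 : e₁ ≠ 1)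
    (n : ℕ) (hn : 2 ≤ n)
    (htor : ∀ k ∈ ({2, 3, n - 1, n - 3} : Set ℕ), 1 ≤ k → ∀ x : R, k • x = 0 → x = 0)
    (hc1 : (∀ x ∈ P12 e₁, (∀ y ∈ P21 e₁, x * y = 0) → x = 0) ∧
           (∀ x ∈ P21 e₁, (∀ y ∈ P12 e₁, x * y = 0) → x = 0))
    (hc2 : (∀ x ∈ P11 e₁, (∀ y ∈ P12 e₁, x * y = 0) → x = 0) ∧
           (∀ x ∈ P11 e₁, (∀ y ∈ P21 e₁, y * x = 0) → x = 0))
    (hc3 : (∀ x ∈ P22 e₁, (∀ y ∈ P12 e₁, y * x = 0) → x = 0) ∧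
           (∀ x ∈ P22 e₁, (∀ y ∈ P21 e₁, x * y = 0) → x = 0))
    (hc4 : ∀ z ∈ rctr R, z ≠ 0 → ∀ r : R, ∃ s : R, z * s = r)
    (D : R → R) (hD : IsMultLieNDeriv n D)
    (hDe₁ : D e₁ ∈ rctr R) :
    D e₂ ∈ rctr R :=
  stmt12_general halt e₁ e₂ he₂ he n hn htor hc2 hc3 D hD hDe₁
end

section
/- Let R be a unital alternative ring with nontrivial idempotent e₁ and e₂ = 1 − e₁, k-torsion free for every k ∈ {2, 3, n−1, n−3} with k ≥ 1, satisfying conditions (1), (2), (3) and (4), and let D : R → R be a multiplicative Lie n-derivation (n ≥ 2) satisfying conditions (a) and (b) and with D(e₁) ∈ Z(R). Then for i ∈ {1,2}, D(R_ii) ⊆ R_ii + Z(R); that is, for every a ∈ R_ii there exist b ∈ R_ii and z ∈ Z(R) with D(a) = b + z. -/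
/-!
Let `a` commute with `e₁`. Then `p_n(a, e₁, …, e₁) = 0`, and expanding `D` on it, every
summand but the first vanishes because `D e₁` is central; so `ad_{e₁}^{n-1}(D a) = 0`. In an
alternative ring `ad_e³ = ad_e` for an idempotent `e`, hence `D a` commutes with `e₁`, i.e. has
no off-diagonal Peirce components. Conditions (a) and (b) make the opposite diagonal corner of
`D a` a central multiple `z e_j`, so `D a - z` lies in `R_ii`.
-/

namespace IsAlt

section NonUnital

variable {R : Type*} [NonUnitalNonAssocRing R] (halt : IsAlt R)
include halt

theorem flexible (x y : R) : x * y * x = x * (y * x) := by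
  have h := (halt (x + y) x).1
  simp only [add_mul, mul_add, (halt x x).1, (halt x y).2, (halt y x).1] at h
  linear_combination (norm := abel_nf) h

variable {e : R} (he : e * e = e)
include he

theorem idem_mul_idem_mul_s13 (y : R) : e * (e * y) = e * y := by
  rw [← (halt e y).1, he]

theorem mul_idem_mul_idem_s13 (y : R) : y * e * e = y * e := by
  rw [(halt e y).2, he]

theorem lie_lie_lie_idem (t : R) : ⁅⁅⁅t, e⁆, e⁆, e⁆ = ⁅t, e⁆ := by
  simp only [Ring.lie_def, sub_mul, mul_sub, halt.idem_mul_idem_mul_s13 he,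
    halt.mul_idem_mul_idem_s13 he, halt.flexible]
  abel

end NonUnital

section Unital

variable {R : Type*} [NonAssocRing R] (halt : IsAlt R) {e t z : R} (he : e * e = e)
  (ht : Commute t e) (hz : z ∈ rctr R)
include halt he ht

theorem idem_mul_mul_idem_of_commute : e * t * e = e * t := by
  rw [halt.flexible, ht.eq, halt.idem_mul_idem_mul_s13 he]

include hz

theorem exists_mem_P11_add_of_commute (h : (1 - e) * t * (1 - e) = z * (1 - e)) :
    ∃ b ∈ P11 e, t = b + z := by
  have hete := halt.idem_mul_mul_idem_of_commute he ht
  have hcorner : (1 - e) * t * (1 - e) = t - e * t := by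
    simp only [sub_mul, mul_sub, one_mul, mul_one, hete, ht.eq]
    abel
  refine ⟨e * t - z * e, ⟨?_, ?_⟩, ?_⟩
  · rw [mul_sub, halt.idem_mul_idem_mul_s13 he, hz e, halt.idem_mul_idem_mul_s13 he]
  · rw [sub_mul, hete, halt.mul_idem_mul_idem_s13 he]
  · rw [hcorner, mul_sub, mul_one] at h
    linear_combination (norm := abel_nf) h

theorem exists_mem_P22_add_of_commute (h : e * t * e = z * e) : ∃ b ∈ P22 e, t = b + z := by
  have het : e * t = z * e := by rw [← h, halt.idem_mul_mul_idem_of_commute he ht]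
  refine ⟨t - z, ⟨?_, ?_⟩, (sub_add_cancel t z).symm⟩
  · rw [mul_sub, het, hz e, sub_self]
  · rw [sub_mul, ht.eq, het, sub_self]

end Unital

end IsAlt

theorem Function.apply_eq_zero_of_iterate_succ_eq_zero {M : Type*} [Zero M] {f : M → M}
    (hf : ∀ x, f (f (f x)) = f x) (h0 : f 0 = 0) :
    ∀ (k : ℕ) (t : M), f^[k + 1] t = 0 → f t = 0
  | 0, _, ht => ht
  | 1, t, ht => by rw [← hf, show f (f t) = 0 from ht, h0]
  | k + 2, t, ht => by
    refine apply_eq_zero_of_iterate_succ_eq_zero hf h0 k t ?_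
    rwa [show f^[k + 3] t = f^[k + 1] t by simp only [Function.iterate_succ_apply, hf]] at ht

section IteratedCommutator

variable {R : Type*} [NonUnitalNonAssocRing R]

theorem pn_succ_succ (m : ℕ) (x : Fin (m + 2) → R) :
    pn (m + 2) x = ⁅pn (m + 1) (fun i => x i.castSucc), x (Fin.last (m + 1))⁆ := rfl

theorem pn_eq_zero_of_commute :
    ∀ (m : ℕ) (x : Fin (m + 2) → R), Commute (x 0) (x 1) → pn (m + 2) x = 0
  | 0, _, h => h.lie_eq
  | m + 1, x, h => by
    rw [pn_succ_succ, pn_eq_zero_of_commute m _ h, (Commute.zero_left _).lie_eq]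

theorem pn_ite_eq_iterate_lie : ∀ (m : ℕ) (t e : R),
    pn (m + 2) (fun i => if i = 0 then t else e) = (fun s => ⁅s, e⁆)^[m + 1] t
  | 0, _, _ => rfl
  | m + 1, t, e => by
    rw [pn_succ_succ, Function.iterate_succ_apply', ← pn_ite_eq_iterate_lie m t e]
    simp only [Fin.castSucc_eq_zero_iff, if_neg (Fin.last_pos).ne']

end IteratedCommutator

namespace IsMultLieNDeriv

variable {R : Type*} [NonUnitalNonAssocRing R] {m : ℕ} {D : R → R}
  (hD : IsMultLieNDeriv (m + 2) D)
include hD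

theorem map_zero : D 0 = 0 := by
  have h10 : (1 : Fin (m + 2)) ≠ 0 := Fin.zero_lt_one.ne'
  have h := hD fun _ => 0
  rw [pn_eq_zero_of_commute m _ (Commute.refl 0)] at h
  rw [h]
  refine Finset.sum_eq_zero fun i _ => pn_eq_zero_of_commute m _ ?_
  rcases eq_or_ne i 0 with rfl | hi
  · rw [Function.update_self, Function.update_of_ne h10]
    exact Commute.zero_right _
  · simp [Function.update_of_ne hi.symm]

theorem commute_apply_of_commute (halt : IsAlt R) {e a : R} (he : e * e = e)
    (hDe : D e ∈ rctr R) (hae : Commute a e) : Commute (D a) e := by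
  set x : Fin (m + 2) → R := fun i => if i = 0 then a else e with hx
  have h10 : (1 : Fin (m + 2)) ≠ 0 := Fin.zero_lt_one.ne'
  have hzero : pn (m + 2) x = 0 := by
    rw [hx, pn_ite_eq_iterate_lie, Function.iterate_succ_apply, hae.lie_eq,
      Function.iterate_fixed ((Commute.zero_left e).lie_eq) m]
  have hother (i : Fin (m + 2)) (hi : i ≠ 0) :
      pn (m + 2) (Function.update x i (D (x i))) = 0 := by
    refine pn_eq_zero_of_commute m _ ?_
    rcases eq_or_ne i 1 with rfl | hi1
    · simpa [hx, h10] using (show Commute a (D e) from (hDe a).symm)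
    · simpa [hx, h10, Function.update_of_ne hi.symm, Function.update_of_ne hi1.symm] using hae
  have h := hD x
  rw [hzero, hD.map_zero, Fintype.sum_eq_single 0 hother] at h
  have hupd : Function.update x 0 (D (x 0)) = fun i => if i = 0 then D a else e := by
    funext i
    rcases eq_or_ne i 0 with rfl | hi <;> simp [*]
  rw [hupd, pn_ite_eq_iterate_lie] at h
  exact commute_iff_lie_eq.mpr <|
    Function.apply_eq_zero_of_iterate_succ_eq_zero (f := fun s => ⁅s, e⁆)
      (halt.lie_lie_lie_idem he) (Commute.zero_left e).lie_eq m _ h.symm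

end IsMultLieNDeriv

theorem stmt13_general {R : Type*} [NonAssocRing R] (halt : IsAlt R)
    (e₁ e₂ : R) (he₂ : e₂ = 1 - e₁)
    (he : e₁ * e₁ = e₁)
    (n : ℕ) (hn : 2 ≤ n)
    (D : R → R) (hD : IsMultLieNDeriv n D)
    (ha : ∀ a ∈ P11 e₁, ∃ z ∈ rctr R, (e₂ * D a) * e₂ = z * e₂)
    (hb : ∀ a ∈ P22 e₁, ∃ z ∈ rctr R, (e₁ * D a) * e₁ = z * e₁)
    (hDe₁ : D e₁ ∈ rctr R) :
    (∀ a ∈ P11 e₁, ∃ b ∈ P11 e₁, ∃ z ∈ rctr R, D a = b + z) ∧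
    (∀ a ∈ P22 e₁, ∃ b ∈ P22 e₁, ∃ z ∈ rctr R, D a = b + z) := by
  obtain ⟨m, rfl⟩ : ∃ m, n = m + 2 := ⟨n - 2, by omega⟩
  subst he₂
  have hDcomm (a : R) (hae : a * e₁ = e₁ * a) : Commute (D a) e₁ :=
    hD.commute_apply_of_commute halt he hDe₁ hae
  constructor
  · rintro a ⟨hea, hae⟩
    obtain ⟨z, hz, hcorner⟩ := ha a ⟨hea, hae⟩
    obtain ⟨b, hbP, hDa⟩ :=
      halt.exists_mem_P11_add_of_commute he (hDcomm a (hae.trans hea.symm)) hz hcorner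
    exact ⟨b, hbP, z, hz, hDa⟩
  · rintro a ⟨hea, hae⟩
    obtain ⟨z, hz, hcorner⟩ := hb a ⟨hea, hae⟩
    obtain ⟨b, hbP, hDa⟩ :=
      halt.exists_mem_P22_add_of_commute he (hDcomm a (hae.trans hea.symm)) hz hcorner
    exact ⟨b, hbP, z, hz, hDa⟩

theorem stmt13 {R : Type*} [NonAssocRing R] (halt : IsAlt R)
    (e₁ e₂ : R) (he₂ : e₂ = 1 - e₁)
    (he : e₁ * e₁ = e₁) (hne0 : e₁ ≠ 0) (hne1 : e₁ ≠ 1)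
    (n : ℕ) (hn : 2 ≤ n)
    (htor : ∀ k ∈ ({2, 3, n - 1, n - 3} : Set ℕ), 1 ≤ k → ∀ x : R, k • x = 0 → x = 0)
    (hc1 : (∀ x ∈ P12 e₁, (∀ y ∈ P21 e₁, x * y = 0) → x = 0) ∧
           (∀ x ∈ P21 e₁, (∀ y ∈ P12 e₁, x * y = 0) → x = 0))
    (hc2 : (∀ x ∈ P11 e₁, (∀ y ∈ P12 e₁, x * y = 0) → x = 0) ∧
           (∀ x ∈ P11 e₁, (∀ y ∈ P21 e₁, y * x = 0) → x = 0))
    (hc3 : (∀ x ∈ P22 e₁, (∀ y ∈ P12 e₁, y * x = 0) → x = 0) ∧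
           (∀ x ∈ P22 e₁, (∀ y ∈ P21 e₁, x * y = 0) → x = 0))
    (hc4 : ∀ z ∈ rctr R, z ≠ 0 → ∀ r : R, ∃ s : R, z * s = r)
    (D : R → R) (hD : IsMultLieNDeriv n D)
    (ha : ∀ a ∈ P11 e₁, ∃ z ∈ rctr R, (e₂ * D a) * e₂ = z * e₂)
    (hb : ∀ a ∈ P22 e₁, ∃ z ∈ rctr R, (e₁ * D a) * e₁ = z * e₁)
    (hDe₁ : D e₁ ∈ rctr R) :
    (∀ a ∈ P11 e₁, ∃ b ∈ P11 e₁, ∃ z ∈ rctr R, D a = b + z) ∧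
    (∀ a ∈ P22 e₁, ∃ b ∈ P22 e₁, ∃ z ∈ rctr R, D a = b + z) :=
  stmt13_general halt e₁ e₂ he₂ he n hn D hD ha hb hDe₁
end
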